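/- Let g11, g12, g21, g22 > 0 and P1, P2 > 0. Let (P11, P21, P12, P22) be a feasible power allocation achieving rates (R1, R2). If (2^R1 - 1)(2^R2 - 1) > 1 and both P12 > 0 and P22 > 0, then there exists a feasible power allocation achieving user-1 rate exactly R1 and user-2 rate strictly greater than R2 (obtained by decreasing P12 and P22). -/

import Mathlib

/-- User-1 rate of a power allocation. -/
noncomputable def rate1 (g11 g12 P11 P21 P12 P22 : ℝ) : ℝ :=
  Real.logb 2 (1 + (g11 * P11 + g12 * P12) / (1 + g11 * P21 + g12 * P22))

/-- User-2 rate of a power allocation. -/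
noncomputable def rate2 (g21 g22 P11 P21 P12 P22 : ℝ) : ℝ :=
  Real.logb 2 (1 + (g21 * P21 + g22 * P22) / (1 + g21 * P11 + g22 * P12))

/-- Feasibility of a power allocation under per-BTS power budgets. -/
def feasible (P1 P2 P11 P21 P12 P22 : ℝ) : Prop :=
  0 ≤ P11 ∧ 0 ≤ P21 ∧ 0 ≤ P12 ∧ 0 ≤ P22 ∧ P11 + P21 ≤ P1 ∧ P12 + P22 ≤ P2

/-!
Let `t` and `s` be the SINRs of the two users; since `2 ^ R - 1` is the SINR, the hypothesis
reads `t * s > 1`. Lower BTS 2's powers by `P22 ↦ P22 - ε` and `P12 ↦ P12 - t ε`. User 1 loses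
`g12 t ε` of signal and `g12 ε` of interference, so its SINR stays `t`. User 2 loses `g22 ε` of
signal but `g22 t ε` of interference, and because `t > 1 / s` this raises its SINR.
-/

noncomputable def sinr1 (g11 g12 P11 P21 P12 P22 : ℝ) : ℝ :=
  (g11 * P11 + g12 * P12) / (1 + g11 * P21 + g12 * P22)

noncomputable def sinr2 (g21 g22 P11 P21 P12 P22 : ℝ) : ℝ :=
  (g21 * P21 + g22 * P22) / (1 + g21 * P11 + g22 * P12)

section

variable {g11 g12 g21 g22 P11 P21 P12 P22 : ℝ}

lemma sinr2_nonneg (hg21 : 0 ≤ g21) (hg22 : 0 ≤ g22) (hP11 : 0 ≤ P11) (hP21 : 0 ≤ P21)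
    (hP12 : 0 ≤ P12) (hP22 : 0 ≤ P22) : 0 ≤ sinr2 g21 g22 P11 P21 P12 P22 := by
  unfold sinr2; positivity

lemma two_rpow_rate1 (h : 0 ≤ sinr1 g11 g12 P11 P21 P12 P22) :
    (2 : ℝ) ^ rate1 g11 g12 P11 P21 P12 P22 = 1 + sinr1 g11 g12 P11 P21 P12 P22 :=
  Real.rpow_logb two_pos (by norm_num) (by unfold sinr1 at h; linarith)

lemma two_rpow_rate2 (h : 0 ≤ sinr2 g21 g22 P11 P21 P12 P22) :
    (2 : ℝ) ^ rate2 g21 g22 P11 P21 P12 P22 = 1 + sinr2 g21 g22 P11 P21 P12 P22 :=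
  Real.rpow_logb two_pos (by norm_num) (by unfold sinr2 at h; linarith)

lemma sinr1_sub_mul_sinr1 (ε : ℝ) (hB : 1 + g11 * P21 + g12 * P22 ≠ 0)
    (hBε : 1 + g11 * P21 + g12 * (P22 - ε) ≠ 0) :
    sinr1 g11 g12 P11 P21 (P12 - sinr1 g11 g12 P11 P21 P12 P22 * ε) (P22 - ε) =
      sinr1 g11 g12 P11 P21 P12 P22 := by
  unfold sinr1
  rw [div_eq_div_iff hBε hB]
  field_simp
  ring

lemma sinr2_lt_sinr2_sub {t ε : ℝ} (hg22 : 0 < g22) (hε : 0 < ε)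
    (hD : 0 < 1 + g21 * P11 + g22 * P12) (hDε : 0 < 1 + g21 * P11 + g22 * (P12 - t * ε))
    (hts : 1 < t * sinr2 g21 g22 P11 P21 P12 P22) :
    sinr2 g21 g22 P11 P21 P12 P22 < sinr2 g21 g22 P11 P21 (P12 - t * ε) (P22 - ε) := by
  unfold sinr2 at hts ⊢
  rw [mul_div_assoc', one_lt_div hD] at hts
  rw [div_lt_div_iff₀ hD hDε]
  nlinarith [mul_lt_mul_of_pos_left hts (mul_pos hg22 hε)]

end

theorem both_messages_improvable_general
    (g11 g12 g21 g22 P1 P2 R1 R2 : ℝ)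
    (hg11 : 0 < g11) (hg12 : 0 < g12) (hg21 : 0 < g21) (hg22 : 0 < g22)
    (P11 P21 P12 P22 : ℝ)
    (hfeas : feasible P1 P2 P11 P21 P12 P22)
    (hR1 : rate1 g11 g12 P11 P21 P12 P22 = R1)
    (hR2 : rate2 g21 g22 P11 P21 P12 P22 = R2)
    (hcond : 1 < ((2 : ℝ) ^ R1 - 1) * ((2 : ℝ) ^ R2 - 1))
    (hP12pos : 0 < P12) (hP22pos : 0 < P22) :
    ∃ Q12 Q22, Q12 ≤ P12 ∧ Q22 ≤ P22 ∧
      feasible P1 P2 P11 P21 Q12 Q22 ∧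
      rate1 g11 g12 P11 P21 Q12 Q22 = R1 ∧ R2 < rate2 g21 g22 P11 P21 Q12 Q22 := by
  obtain ⟨hP11, hP21, -, -, hsum1, hsum2⟩ := hfeas
  set t := sinr1 g11 g12 P11 P21 P12 P22
  have ht : 0 < t := by unfold t sinr1; positivity
  have hs := sinr2_nonneg hg21.le hg22.le hP11 hP21 hP12pos.le hP22pos.le
  have hts : 1 < t * sinr2 g21 g22 P11 P21 P12 P22 := by
    rw [← hR1, ← hR2, two_rpow_rate1 ht.le, two_rpow_rate2 hs] at hcond
    simpa using hcond
  set ε := min P22 (P12 / t)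
  have hε : 0 < ε := lt_min hP22pos (div_pos hP12pos ht)
  have htε : 0 < t * ε := mul_pos ht hε
  have hQ12 : 0 ≤ P12 - t * ε := sub_nonneg.mpr ((le_div_iff₀' ht).mp (min_le_right _ _))
  have hQ22 : 0 ≤ P22 - ε := sub_nonneg.mpr (min_le_left _ _)
  refine ⟨P12 - t * ε, P22 - ε, by linarith, by linarith,
    ⟨hP11, hP21, hQ12, hQ22, hsum1, by linarith⟩, ?_, ?_⟩
  · rw [← hR1, rate1, rate1, ← sinr1, ← sinr1,
      sinr1_sub_mul_sinr1 ε (by positivity) (by positivity)]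
  · rw [← hR2, rate2, rate2, ← sinr2, ← sinr2]
    exact Real.logb_lt_logb one_lt_two (by linarith)
      (by linarith [sinr2_lt_sinr2_sub hg22 hε (by positivity) (by positivity) hts])

theorem both_messages_improvable
    (g11 g12 g21 g22 P1 P2 R1 R2 : ℝ)
    (hg11 : 0 < g11) (hg12 : 0 < g12) (hg21 : 0 < g21) (hg22 : 0 < g22)
    (hP1 : 0 < P1) (hP2 : 0 < P2)
    (P11 P21 P12 P22 : ℝ)
    (hfeas : feasible P1 P2 P11 P21 P12 P22)
    (hR1 : rate1 g11 g12 P11 P21 P12 P22 = R1)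
    (hR2 : rate2 g21 g22 P11 P21 P12 P22 = R2)
    (hcond : 1 < ((2 : ℝ) ^ R1 - 1) * ((2 : ℝ) ^ R2 - 1))
    (hP12pos : 0 < P12) (hP22pos : 0 < P22) :
    ∃ Q12 Q22, Q12 ≤ P12 ∧ Q22 ≤ P22 ∧
      feasible P1 P2 P11 P21 Q12 Q22 ∧
      rate1 g11 g12 P11 P21 Q12 Q22 = R1 ∧ R2 < rate2 g21 g22 P11 P21 Q12 Q22 :=
  both_messages_improvable_general g11 g12 g21 g22 P1 P2 R1 R2 hg11 hg12 hg21 hg22 P11 P21 P12 P22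
    hfeas hR1 hR2 hcond hP12pos hP22pos
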